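/- arXiv:1702.01451 — 4 statements merged into one kernel-verified Lean document; each statement's English description precedes it below -/
import Mathlib

section
/- Let G = (V,E) be a graph and G' the graph obtained from G by adding, for each edge (u,v) ∈ E, a new vertex t_{uv} adjacent to exactly u and v. Then a set S ⊆ V is a vertex cover of G if and only if removing S from G' makes G' triangle-free. -/
/-- The edge-apex augmentation `G'` of `G`: for every edge `(u,v)` of `G`, a new
vertex `t_{uv}` is added, adjacent exactly to `u` and `v`. -/
def apexGraph {V : Type*} (G : SimpleGraph V) : SimpleGraph (V ⊕ G.edgeSet) :=
  SimpleGraph.fromRel (fun a b => match a, b with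
    | Sum.inl u, Sum.inl v => G.Adj u v
    | Sum.inl u, Sum.inr e => u ∈ e.1
    | _, _ => False)

/-!
The apex vertices `t_{uv}` are pairwise non-adjacent, so a triangle of `G'` has at most one of
them and hence contains an edge of `G`; conversely every edge `uv` of `G` spans the triangle
`u, v, t_{uv}`. So the triangles surviving the removal of `S` are exactly those over the edges
of `G` that `S` misses.
-/

namespace SimpleGraph

variable {V : Type*} {G : SimpleGraph V} {u v : V} {e f : G.edgeSet}

@[simp]
theorem apexGraph_adj_inl_inl : (apexGraph G).Adj (.inl u) (.inl v) ↔ G.Adj u v := by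
  simp only [apexGraph, fromRel_adj, ne_eq, Sum.inl.injEq]
  exact ⟨fun ⟨_, h⟩ ↦ h.elim id .symm, fun h ↦ ⟨h.ne, .inl h⟩⟩

@[simp]
theorem apexGraph_adj_inl_inr : (apexGraph G).Adj (.inl u) (.inr e) ↔ u ∈ (e : Sym2 V) := by
  simp [apexGraph]

@[simp]
theorem apexGraph_not_adj_inr_inr : ¬ (apexGraph G).Adj (.inr e) (.inr f) := by
  simp [apexGraph]

theorem apexGraph_isNClique_three [DecidableEq V] (h : G.Adj u v) :
    (apexGraph G).IsNClique 3 {.inl u, .inl v, .inr ⟨s(u, v), h⟩} := by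
  simp [is3Clique_triple_iff, h]

theorem IsNClique.exists_apexGraph_adj_inl [DecidableEq V] {t : Finset (V ⊕ G.edgeSet)}
    (ht : (apexGraph G).IsNClique 3 t) : ∃ u v, G.Adj u v ∧ .inl u ∈ t ∧ .inl v ∈ t := by
  obtain ⟨a, b, c, hab, hac, hbc, rfl⟩ := is3Clique_iff.1 ht
  rcases a with u | e <;> rcases b with v | f <;> rcases c with w | g <;>
    simp only [apexGraph_adj_inl_inl, apexGraph_not_adj_inr_inr] at hab hac hbc
  exacts [⟨u, v, hab, by simp⟩, ⟨u, v, hab, by simp⟩, ⟨u, w, hac, by simp⟩, ⟨v, w, hbc, by simp⟩]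

end SimpleGraph

/-- `S ⊆ V` is a vertex cover of `G` iff removing `S` from `G'` makes `G'` triangle-free. -/
theorem vertexCover_iff_apex_triangleFree {V : Type*} (G : SimpleGraph V) (S : Set V) :
    (∀ u v, G.Adj u v → u ∈ S ∨ v ∈ S) ↔
      ((apexGraph G).induce {x | x ∉ Sum.inl '' S}).CliqueFree 3 := by
  classical
  rw [SimpleGraph.cliqueFree_induce_iff]
  constructor
  · intro hS t htS ht
    obtain ⟨u, v, huv, hu, hv⟩ := ht.exists_apexGraph_adj_inl
    rcases hS u v huv with h | h
    · exact htS hu ⟨u, h, rfl⟩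
    · exact htS hv ⟨v, h, rfl⟩
  · intro hfree u v huv
    by_contra! h
    refine hfree ?_ (SimpleGraph.apexGraph_isNClique_three huv)
    grind
end

section
/- If there exists a set of k vertices in G' (the edge-apex augmentation of G) whose removal makes G' triangle-free, then there exists such a set consisting only of original vertices of G; consequently G has a vertex cover of size at most k. -/
lemma induce_cliqueFree_three_iff {W : Type*} (H : SimpleGraph W) (s : Set W) :
    (H.induce s).CliqueFree 3 ↔
      ∀ a b c : W, a ∈ s → b ∈ s → c ∈ s →
        H.Adj a b → H.Adj a c → H.Adj b c → False := by
  constructor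
  · intro hcf a b c ha hb hc hab hac hbc
    classical
    have hab' : a ≠ b := hab.ne
    have hac' : a ≠ c := hac.ne
    have hbc' : b ≠ c := hbc.ne
    refine hcf {⟨a, ha⟩, ⟨b, hb⟩, ⟨c, hc⟩} ?_
    constructor
    · intro x hx y hy hxy
      simp only [Finset.coe_insert, Set.mem_insert_iff, Finset.coe_singleton,
        Set.mem_singleton_iff] at hx hy
      rcases hx with rfl | rfl | rfl <;> rcases hy with rfl | rfl | rfl <;>
        first
          | exact absurd rfl hxy
          | exact hab | exact hab.symm | exact hac | exact hac.symm
          | exact hbc | exact hbc.symm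
    · rw [Finset.card_insert_of_notMem, Finset.card_insert_of_notMem,
        Finset.card_singleton]
      · simp [Subtype.ext_iff, hbc']
      · simp [Subtype.ext_iff, hab', hac']
  · intro h t ht
    classical
    obtain ⟨x, y, z, hxy, hxz, hyz, hteq⟩ := Finset.card_eq_three.mp ht.2
    rw [hteq] at ht
    have h1 : (H.induce s).Adj x y := ht.1 (by simp) (by simp) hxy
    have h2 : (H.induce s).Adj x z := ht.1 (by simp) (by simp) hxz
    have h3 : (H.induce s).Adj y z := ht.1 (by simp) (by simp) hyz
    exact h x.1 y.1 z.1 x.2 y.2 z.2 h1 h2 h3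

lemma apexGraph_adj_inl_inl {V : Type*} {G : SimpleGraph V} {u v : V} :
    (apexGraph G).Adj (Sum.inl u) (Sum.inl v) ↔ G.Adj u v := by
  simp only [apexGraph, SimpleGraph.fromRel_adj]
  constructor
  · rintro ⟨-, h | h⟩
    · exact h
    · exact h.symm
  · intro h
    exact ⟨by simp [h.ne], Or.inl h⟩

lemma apexGraph_adj_inl_inr {V : Type*} {G : SimpleGraph V} {u : V} {e : G.edgeSet} :
    (apexGraph G).Adj (Sum.inl u) (Sum.inr e) ↔ u ∈ e.1 := by
  simp only [apexGraph, SimpleGraph.fromRel_adj]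
  constructor
  · rintro ⟨-, h | h⟩
    · exact h
    · exact h.elim
  · intro h
    exact ⟨by simp, Or.inl h⟩

lemma apexGraph_not_adj_inr_inr {V : Type*} {G : SimpleGraph V} {e f : G.edgeSet} :
    ¬ (apexGraph G).Adj (Sum.inr e) (Sum.inr f) := by
  simp only [apexGraph, SimpleGraph.fromRel_adj]
  rintro ⟨-, h | h⟩ <;> exact h

/-- If removing some `k` vertices of `G'` makes it triangle-free, then removing some `≤ k`
original vertices also does; consequently `G` has a vertex cover of size at most `k`. -/
theorem apex_breaking_gives_vertexCover {V : Type*} [DecidableEq V] (G : SimpleGraph V)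
    (k : ℕ) (D : Finset (V ⊕ G.edgeSet)) (hcard : D.card = k)
    (hfree : ((apexGraph G).induce {x | x ∉ D}).CliqueFree 3) :
    (∃ D' : Finset (V ⊕ G.edgeSet), D'.card ≤ k ∧ (∀ x ∈ D', x.isLeft) ∧
      ((apexGraph G).induce {x | x ∉ D'}).CliqueFree 3) ∧
    (∃ C : Finset V, C.card ≤ k ∧ ∀ u v, G.Adj u v → u ∈ C ∨ v ∈ C) := by
  classical
  rw [induce_cliqueFree_three_iff] at hfree
  -- the projection to an original vertex
  set f : V ⊕ G.edgeSet → V := Sum.elim id (fun e => e.1.out.1) with hf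
  have hfmem : ∀ e : G.edgeSet, f (Sum.inr e) ∈ e.1 := fun e => Sym2.out_fst_mem e.1
  set D' : Finset (V ⊕ G.edgeSet) := D.image (fun x => Sum.inl (f x)) with hD'
  have hDD' : ∀ u : V, Sum.inl u ∈ D → Sum.inl u ∈ D' := by
    intro u hu
    exact Finset.mem_image.mpr ⟨Sum.inl u, hu, rfl⟩
  -- main triangle analysis
  have key : ∀ a b c : V ⊕ G.edgeSet, a ∉ D' → b ∉ D' → c ∉ D' →
      (apexGraph G).Adj a b → (apexGraph G).Adj a c → (apexGraph G).Adj b c → False := by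
    have avoid : ∀ u : V, Sum.inl u ∉ D' → Sum.inl u ∉ D := fun u h hu => h (hDD' u hu)
    -- a helper for the case of two original vertices and one apex vertex
    have tri : ∀ (u v : V) (e : G.edgeSet), Sum.inl u ∉ D' → Sum.inl v ∉ D' →
        G.Adj u v → u ∈ e.1 → v ∈ e.1 → False := by
      intro u v e hu hv huv hue hve
      have he1 : e.1 = s(u, v) := (Sym2.mem_and_mem_iff huv.ne).mp ⟨hue, hve⟩
      by_cases heD : Sum.inr e ∈ D
      · -- the chosen endpoint of e is in D'
        have : Sum.inl (f (Sum.inr e)) ∈ D' := Finset.mem_image.mpr ⟨Sum.inr e, heD, rfl⟩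
        have hmem := hfmem e
        rw [he1, Sym2.mem_iff] at hmem
        rcases hmem with h | h <;> rw [h] at this
        · exact hu this
        · exact hv this
      · exact hfree (Sum.inl u) (Sum.inl v) (Sum.inr e) (avoid u hu) (avoid v hv) heD
          (apexGraph_adj_inl_inl.mpr huv) (apexGraph_adj_inl_inr.mpr hue)
          (apexGraph_adj_inl_inr.mpr hve)
    rintro (u | e) (v | e') (w | e'') ha hb hc hab hac hbc
    · exact hfree _ _ _ (avoid u ha) (avoid v hb) (avoid w hc) hab hac hbc
    · exact tri u v e'' ha hb (apexGraph_adj_inl_inl.mp hab)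
        (apexGraph_adj_inl_inr.mp hac) (apexGraph_adj_inl_inr.mp hbc)
    · exact tri u w e' ha hc (apexGraph_adj_inl_inl.mp hac)
        (apexGraph_adj_inl_inr.mp hab) (apexGraph_adj_inl_inr.mp hbc.symm)
    · exact apexGraph_not_adj_inr_inr hbc
    · exact tri v w e hb hc (apexGraph_adj_inl_inl.mp hbc)
        (apexGraph_adj_inl_inr.mp hab.symm) (apexGraph_adj_inl_inr.mp hac.symm)
    · exact apexGraph_not_adj_inr_inr hac
    · exact apexGraph_not_adj_inr_inr hab
    · exact apexGraph_not_adj_inr_inr hab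
  constructor
  · refine ⟨D', ?_, ?_, ?_⟩
    · exact hcard ▸ Finset.card_image_le
    · intro x hx
      obtain ⟨y, -, rfl⟩ := Finset.mem_image.mp hx
      rfl
    · rw [induce_cliqueFree_three_iff]
      exact key
  · refine ⟨D.image f, hcard ▸ Finset.card_image_le, ?_⟩
    intro u v huv
    by_contra h
    push_neg at h
    obtain ⟨hu, hv⟩ := h
    have hu' : Sum.inl u ∉ D := fun hm => hu (Finset.mem_image.mpr ⟨_, hm, rfl⟩)
    have hv' : Sum.inl v ∉ D := fun hm => hv (Finset.mem_image.mpr ⟨_, hm, rfl⟩)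
    set e : G.edgeSet := ⟨s(u, v), huv⟩ with he
    have he' : Sum.inr e ∉ D := by
      intro hm
      have : f (Sum.inr e) ∈ D.image f := Finset.mem_image.mpr ⟨_, hm, rfl⟩
      have hmem := hfmem e
      rw [Sym2.mem_iff] at hmem
      rcases hmem with h | h <;> rw [h] at this
      · exact hu this
      · exact hv this
    exact hfree (Sum.inl u) (Sum.inl v) (Sum.inr e) hu' hv' he'
      (apexGraph_adj_inl_inl.mpr huv) (apexGraph_adj_inl_inr.mpr (by simp [he]))
      (apexGraph_adj_inl_inr.mpr (by simp [he]))
end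

section
/- Greedy selection for maximizing a monotone submodular set function f with f(∅)=0 under a cardinality constraint k achieves an objective value of at least (1 − 1/e) times the optimum; in particular, if S_k is the greedy set of size k, then f(S_k) ≥ (1 − (1−1/k)^k)·max_{|S|=k} f(S) ≥ (1 − 1/e)·max_{|S|=k} f(S). -/
/-- Submodular sum bound: the gain of adding `B` to `A` is at most the sum of
individual marginal gains at `A`. -/
lemma greedy_submodular_sum_bound {α : Type*} [DecidableEq α] (f : Finset α → ℝ)
    (hsub : ∀ S T : Finset α, S ⊆ T → ∀ u ∉ T,
      f (insert u T) - f T ≤ f (insert u S) - f S)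
    (A B : Finset α) :
    f (A ∪ B) ≤ f A + ∑ v ∈ B, (f (insert v A) - f A) := by
  classical
  induction B using Finset.induction_on with
  | empty => simp
  | @insert x B hx ih =>
    rw [Finset.union_insert, Finset.sum_insert hx]
    by_cases hxA : x ∈ A
    · have h1 : insert x (A ∪ B) = A ∪ B :=
        Finset.insert_eq_self.2 (Finset.mem_union_left _ hxA)
      have h2 : insert x A = A := Finset.insert_eq_self.2 hxA
      rw [h1, h2]
      linarith
    · by_cases hxB : x ∈ A ∪ B
      · have h1 : insert x (A ∪ B) = A ∪ B := Finset.insert_eq_self.2 hxB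
        rcases Finset.mem_union.1 hxB with h | h
        · exact absurd h hxA
        · exact absurd h hx
      · have := hsub A (A ∪ B) Finset.subset_union_left x hxB
        linarith

/-- Greedy selection for a monotone submodular set function `f` with `f ∅ = 0` achieves at
least a `(1 - (1-1/k)^k) ≥ (1 - 1/e)` fraction of the optimum under a cardinality
constraint `k`. -/
theorem greedy_submodular_guarantee {α : Type*} [Fintype α] [DecidableEq α]
    (f : Finset α → ℝ)
    (hmono : ∀ S T : Finset α, S ⊆ T → f S ≤ f T)
    (hsub : ∀ S T : Finset α, S ⊆ T → ∀ u ∉ T,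
      f (insert u T) - f T ≤ f (insert u S) - f S)
    (hempty : f ∅ = 0)
    (k : ℕ) (S : ℕ → Finset α) (hS0 : S 0 = ∅)
    (hstep : ∀ i < k, ∃ u ∉ S i, S (i + 1) = insert u (S i) ∧
      ∀ v ∉ S i, f (insert v (S i)) - f (S i) ≤ f (insert u (S i)) - f (S i)) :
    ∀ T : Finset α, T.card = k →
      (1 - (1 - 1 / (k : ℝ)) ^ k) * f T ≤ f (S k) ∧
      (1 - 1 / Real.exp 1) * f T ≤ f (S k) := by
  intro T hT
  have hT0 : 0 ≤ f T := by
    have := hmono ∅ T (Finset.empty_subset T)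
    linarith [hempty ▸ this]
  rcases Nat.eq_zero_or_pos k with hk | hk
  · subst hk
    have hTe : T = ∅ := Finset.card_eq_zero.mp hT
    subst hTe
    constructor <;> simp [hS0, hempty]
  have hkpos : (0:ℝ) < k := by exact_mod_cast hk
  have hkR : (1:ℝ) ≤ k := by exact_mod_cast hk
  have hfrac : 0 ≤ 1 - 1/(k:ℝ) := by
    rw [sub_nonneg, div_le_one hkpos]; exact hkR
  -- per-step recurrence
  have key : ∀ i < k, f T - f (S (i+1)) ≤ (1 - 1/(k:ℝ)) * (f T - f (S i)) := by
    intro i hi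
    obtain ⟨u, hu, hS1, hmax⟩ := hstep i hi
    have hδ0 : 0 ≤ f (S (i+1)) - f (S i) := by
      rw [hS1, sub_nonneg]; exact hmono _ _ (Finset.subset_insert _ _)
    have hsum := greedy_submodular_sum_bound f hsub (S i) T
    have hterm : ∀ v ∈ T, f (insert v (S i)) - f (S i) ≤ f (S (i+1)) - f (S i) := by
      intro v _
      by_cases hv : v ∈ S i
      · rw [Finset.insert_eq_self.2 hv]; simpa using hδ0
      · rw [hS1]; exact hmax v hv
    have h2 : ∑ v ∈ T, (f (insert v (S i)) - f (S i)) ≤ (k:ℝ) * (f (S (i+1)) - f (S i)) := by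
      calc ∑ v ∈ T, (f (insert v (S i)) - f (S i))
          ≤ ∑ _v ∈ T, (f (S (i+1)) - f (S i)) := Finset.sum_le_sum hterm
        _ = (k:ℝ) * (f (S (i+1)) - f (S i)) := by
            rw [Finset.sum_const, hT, nsmul_eq_mul]
    have h3 : f T ≤ f (S i ∪ T) := hmono _ _ Finset.subset_union_right
    have h4 : f T - f (S i) ≤ (k:ℝ) * (f (S (i+1)) - f (S i)) := by linarith
    have h5 : (f T - f (S i)) / (k:ℝ) ≤ f (S (i+1)) - f (S i) := by
      rw [div_le_iff₀ hkpos]; linarith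
    have heq : (1 - 1/(k:ℝ)) * (f T - f (S i))
        = (f T - f (S i)) - (f T - f (S i)) / k := by ring
    rw [heq]
    linarith
  -- iterate the recurrence
  have iter : ∀ i ≤ k, f T - f (S i) ≤ (1 - 1/(k:ℝ))^i * f T := by
    intro i
    induction i with
    | zero => intro _; simp [hS0, hempty]
    | succ n ih =>
      intro hn
      have hn' : n < k := hn
      have h1 := ih (le_of_lt hn')
      calc f T - f (S (n+1)) ≤ (1 - 1/(k:ℝ)) * (f T - f (S n)) := key n hn'
        _ ≤ (1 - 1/(k:ℝ)) * ((1 - 1/(k:ℝ))^n * f T) :=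
            mul_le_mul_of_nonneg_left h1 hfrac
        _ = (1 - 1/(k:ℝ))^(n+1) * f T := by ring
  have main := iter k le_rfl
  have first : (1 - (1 - 1 / (k : ℝ)) ^ k) * f T ≤ f (S k) := by nlinarith
  refine ⟨first, ?_⟩
  have hpow : (1 - 1/(k:ℝ))^k ≤ 1 / Real.exp 1 := by
    have h1 : 1 - 1/(k:ℝ) ≤ Real.exp (-(1/(k:ℝ))) := by
      have := Real.add_one_le_exp (-(1/(k:ℝ)))
      linarith
    have hk0 : (k:ℝ) ≠ 0 := ne_of_gt hkpos
    calc (1 - 1/(k:ℝ))^k ≤ (Real.exp (-(1/(k:ℝ))))^k := pow_le_pow_left₀ hfrac h1 k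
      _ = Real.exp ((k:ℝ) * (-(1/(k:ℝ)))) := (Real.exp_nat_mul _ k).symm
      _ = Real.exp (-1) := by rw [mul_neg, mul_one_div, div_self hk0]
      _ = 1 / Real.exp 1 := by rw [Real.exp_neg, one_div]
  nlinarith [mul_le_mul_of_nonneg_right hpow hT0]
end

section
/- Input-dependent bound: let f be a monotone submodular function with f(∅)=0 on a finite ground set, S any set, and u₁,…,u_k the k elements of the complement of S with the largest marginal gains Δ_S(u) = f(S∪{u}) − f(S). Then for any set S* of size at most k, f(S*) ≤ f(S) + Σ_{i=1}^{k} Δ_S(u_i). -/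
/-- Input-dependent bound: if `u₁, …, u_k` are `k` distinct elements outside `S` with the
largest marginal gains `Δ_S(u) = f (S ∪ {u}) - f S`, then for every set `S*` of size at
most `k` we have `f S* ≤ f S + ∑ i, Δ_S(u_i)`. -/
theorem input_dependent_bound {α : Type*} [Fintype α] [DecidableEq α]
    (f : Finset α → ℝ)
    (hmono : ∀ S T : Finset α, S ⊆ T → f S ≤ f T)
    (hsub : ∀ S T : Finset α, S ⊆ T → ∀ u ∉ T,
      f (insert u T) - f T ≤ f (insert u S) - f S)
    (hempty : f ∅ = 0)
    (S : Finset α) (k : ℕ) (u : Fin k → α)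
    (hu : ∀ i, u i ∉ S) (hinj : Function.Injective u)
    (hmax : ∀ i : Fin k, ∀ v : α, v ∉ S → (∀ j : Fin k, v ≠ u j) →
      f (insert v S) - f S ≤ f (insert (u i) S) - f S) :
    ∀ Sstar : Finset α, Sstar.card ≤ k →
      f Sstar ≤ f S + ∑ i : Fin k, (f (insert (u i) S) - f S) := by
  intro Sstar hcard
  set g : α → ℝ := fun v => f (insert v S) - f S with hg
  have gnonneg : ∀ v, 0 ≤ g v := fun v => by
    have := hmono S (insert v S) (Finset.subset_insert _ _)
    simp [hg]; linarith
  -- Step 1: f (S ∪ T) ≤ f S + ∑_{v ∈ T \ S} g v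
  have step1 : ∀ T : Finset α, f (S ∪ T) ≤ f S + ∑ v ∈ T \ S, g v := by
    intro T
    induction T using Finset.induction_on with
    | empty => simp
    | @insert a T haT ih =>
      by_cases haS : a ∈ S
      · have h1 : S ∪ insert a T = S ∪ T := by
          rw [Finset.union_insert, Finset.insert_eq_self.2 (Finset.mem_union_left _ haS)]
        have h2 : insert a T \ S = T \ S := Finset.insert_sdiff_of_mem _ haS
        rw [h1, h2]; exact ih
      · have haST : a ∉ S ∪ T := by simp [haS, haT]
        have h1 : S ∪ insert a T = insert a (S ∪ T) := Finset.union_insert _ _ _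
        have h2 : insert a T \ S = insert a (T \ S) :=
          Finset.insert_sdiff_of_notMem _ haS
        have h3 : a ∉ T \ S := fun h => haT (Finset.mem_sdiff.1 h).1
        rw [h1, h2, Finset.sum_insert h3]
        have := hsub S (S ∪ T) Finset.subset_union_left a haST
        simp only [hg]
        linarith
  have h1 : f Sstar ≤ f (S ∪ Sstar) := hmono _ _ Finset.subset_union_right
  have h2 := step1 Sstar
  -- Step 2: compare the sum over Sstar \ S with the sum over Fin k
  set T : Finset α := Sstar \ S with hT
  have hTcard : T.card ≤ k :=
    le_trans (Finset.card_le_card Finset.sdiff_subset) hcard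
  have hTS : ∀ v ∈ T, v ∉ S := fun v hv => (Finset.mem_sdiff.1 hv).2
  classical
  set I : Finset (Fin k) := Finset.univ.filter (fun i => u i ∈ T) with hI
  set Ic : Finset (Fin k) := Finset.univ.filter (fun i => ¬ u i ∈ T) with hIc
  set T1 : Finset α := T.filter (fun v => ∃ j, v = u j) with hT1
  set T2 : Finset α := T.filter (fun v => ¬ ∃ j, v = u j) with hT2
  have hT1img : T1 = I.image u := by
    ext v
    simp only [hT1, hI, Finset.mem_filter, Finset.mem_image, Finset.mem_univ, true_and]
    constructor
    · rintro ⟨hv, j, rfl⟩; exact ⟨j, hv, rfl⟩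
    · rintro ⟨j, hj, rfl⟩; exact ⟨hj, j, rfl⟩
  have hsumT1 : ∑ v ∈ T1, g v = ∑ i ∈ I, g (u i) := by
    rw [hT1img, Finset.sum_image (fun i _ j _ h => hinj h)]
  have hcard1 : T1.card = I.card := by
    rw [hT1img, Finset.card_image_of_injective _ hinj]
  have hsplitT : ∑ v ∈ T, g v = ∑ v ∈ T1, g v + ∑ v ∈ T2, g v :=
    (Finset.sum_filter_add_sum_filter_not T _ g).symm
  have hsplitK : ∑ i : Fin k, g (u i) = ∑ i ∈ I, g (u i) + ∑ i ∈ Ic, g (u i) :=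
    (Finset.sum_filter_add_sum_filter_not Finset.univ _ _).symm
  have hcardsplit : T1.card + T2.card = T.card :=
    Finset.card_filter_add_card_filter_not _
  have hcardIsplit : I.card + Ic.card = k := by
    have := Finset.card_filter_add_card_filter_not
      (s := (Finset.univ : Finset (Fin k))) (p := fun i => u i ∈ T)
    simpa using this
  have hcard2 : T2.card ≤ Ic.card := by omega
  have hsumT2 : ∑ v ∈ T2, g v ≤ ∑ i ∈ Ic, g (u i) := by
    rcases T2.eq_empty_or_nonempty with h | h
    · rw [h, Finset.sum_empty]
      exact Finset.sum_nonneg fun i _ => gnonneg _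
    · have hIcne : Ic.Nonempty := by
        rw [← Finset.card_pos] at h ⊢; omega
      obtain ⟨i0, hi0, hi0min⟩ := Finset.exists_min_image Ic (fun i => g (u i)) hIcne
      have hstep : ∀ v ∈ T2, g v ≤ g (u i0) := by
        intro v hv
        rw [hT2, Finset.mem_filter] at hv
        exact hmax i0 v (hTS v hv.1) (fun j hj => hv.2 ⟨j, hj⟩)
      calc ∑ v ∈ T2, g v ≤ ∑ _v ∈ T2, g (u i0) := Finset.sum_le_sum hstep
        _ = T2.card * g (u i0) := by rw [Finset.sum_const, nsmul_eq_mul]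
        _ ≤ Ic.card * g (u i0) := by
            apply mul_le_mul_of_nonneg_right _ (gnonneg _)
            exact_mod_cast hcard2
        _ ≤ ∑ i ∈ Ic, g (u i) := by
            have := Finset.card_nsmul_le_sum Ic (fun i => g (u i)) (g (u i0))
              (fun i hi => hi0min i hi)
            simpa [nsmul_eq_mul] using this
  have key : ∑ v ∈ T, g v ≤ ∑ i : Fin k, g (u i) := by
    rw [hsplitT, hsplitK, hsumT1]
    linarith
  calc f Sstar ≤ f (S ∪ Sstar) := h1
    _ ≤ f S + ∑ v ∈ T, g v := h2
    _ ≤ f S + ∑ i : Fin k, g (u i) := by linarith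
end
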